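/- Suppose f : X → ℝ is continuous on a Hausdorff topological vector space, locally Lipschitzian at x, and Lf(x,x') is a single point for all x' ∈ X. Then the map x' ↦ Lf(x,x') : X → ℝ is linear and continuous; i.e., f has a Gateaux derivative at x given by Df(x,−) = Lf(x,−). -/

import Mathlib

/-!
Since `Lf(x,u)` is the single point `D u`, the difference quotients `(f (y + r • z) - f y) / r`
converge to `D u` jointly as `y → x`, `z → u`, `r → 0⁺`. Splitting the quotient in direction `z`
into the quotient at `y` in direction `u` plus the quotient at `y + r • u` in direction `z - u`
makes `D` additive. Joint convergence in direction `0` makes all quotients near `(x, 0, 0⁺)` close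
to `D 0`, hence also their limits `D z` for `z` near `0`; so `D` is a continuous additive map,
which over `ℝ` is linear.
-/

open Filter Topology Classical

variable {X : Type*} [AddCommGroup X] [Module ℝ X] [TopologicalSpace X]
  [IsTopologicalAddGroup X] [ContinuousSMul ℝ X] [T2Space X]

/-- The filter of difference quotients `(f (y + r • z) - f y) / r` as `y → x`, `z → x'`,
`r → 0⁺`. -/
noncomputable def dqF (f : X → ℝ) (x x' : X) : Filter ℝ :=
  Filter.map (fun p : (X × X) × ℝ => (f (p.1.1 + p.2 • p.1.2) - f p.1.1) / p.2)
    (((𝓝 x) ×ˢ (𝓝 x')) ×ˢ (𝓝[>] (0 : ℝ)))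

/-- The domain-theoretic directional derivative `Lf(x,x')` as a subset of `ℝ`:
the compact interval `[liminf, limsup]` of the difference quotients when these are
bounded, and the whole real line otherwise. -/
noncomputable def LIntv (f : X → ℝ) (x x' : X) : Set ℝ :=
  if (dqF f x x').IsBounded (· ≤ ·) ∧ (dqF f x x').IsBounded (· ≥ ·) then
    Set.Icc (Filter.liminf id (dqF f x x')) (Filter.limsup id (dqF f x x'))
  else Set.univ

open Function in
theorem tendsto_of_tendsto_uncurry_of_forall_tendsto {α β γ : Type*} [TopologicalSpace γ]
    [RegularSpace γ] {la : Filter α} {lb : Filter β} [lb.NeBot] {Q : α → β → γ} {g : α → γ}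
    {c : γ} (hQ : Tendsto (uncurry Q) (la ×ˢ lb) (𝓝 c)) (hg : ∀ a, Tendsto (Q a) lb (𝓝 (g a))) :
    Tendsto g la (𝓝 c) := by
  refine (closed_nhds_basis c).tendsto_right_iff.2 fun V ⟨hV, hVc⟩ => ?_
  filter_upwards [(hQ.eventually_mem hV).curry] with a ha
  exact hVc.mem_of_tendsto (hg a) ha

section DiffQuot

variable {E : Type*} [AddCommGroup E] [Module ℝ E] {f : E → ℝ}

noncomputable def diffQuot (f : E → ℝ) (y z : E) (r : ℝ) : ℝ := (f (y + r • z) - f y) / r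

theorem diffQuot_add (y z w : E) (r : ℝ) :
    diffQuot f y (z + w) r = diffQuot f y z r + diffQuot f (y + r • z) w r := by
  simp only [diffQuot, smul_add, add_assoc]
  ring

variable [TopologicalSpace E] {x u v : E} {a b : ℝ}

theorem dqF_le_nhds_iff :
    dqF f x u ≤ 𝓝 a ↔ Tendsto (fun p : (E × E) × ℝ => diffQuot f p.1.1 p.1.2 p.2)
      ((𝓝 x ×ˢ 𝓝 u) ×ˢ 𝓝[>] 0) (𝓝 a) :=
  Iff.rfl

theorem dqF_le_nhds_of_LIntv_eq_singleton (h : LIntv f x u = {a}) : dqF f x u ≤ 𝓝 a := by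
  unfold LIntv at h
  split_ifs at h with hb
  · obtain ⟨hinf, hsup⟩ := Set.Icc_eq_singleton_iff.1 h
    exact tendsto_id'.1 <| tendsto_of_liminf_eq_limsup hinf hsup
      (by simpa [IsBoundedUnder] using hb.1) (by simpa [IsBoundedUnder] using hb.2)
  · exact absurd (h ▸ Set.mem_univ (a + 1)) (by simp)

theorem eq_of_dqF_le_nhds (ha : dqF f x u ≤ 𝓝 a) (hb : dqF f x u ≤ 𝓝 b) : a = b :=
  tendsto_nhds_unique (dqF_le_nhds_iff.1 ha) (dqF_le_nhds_iff.1 hb)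

theorem tendsto_diffQuot_of_dqF_le_nhds (h : dqF f x u ≤ 𝓝 a) {α : Type*} {l : Filter α}
    {y z : α → E} {r : α → ℝ} (hy : Tendsto y l (𝓝 x)) (hz : Tendsto z l (𝓝 u))
    (hr : Tendsto r l (𝓝[>] 0)) : Tendsto (fun t => diffQuot f (y t) (z t) (r t)) l (𝓝 a) :=
  ((dqF_le_nhds_iff.1 h).comp ((hy.prodMk hz).prodMk hr)).congr fun _ => rfl

theorem tendsto_diffQuot_nhdsGT_of_dqF_le_nhds (h : dqF f x u ≤ 𝓝 a) :
    Tendsto (diffQuot f x u) (𝓝[>] 0) (𝓝 a) :=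
  tendsto_diffQuot_of_dqF_le_nhds h tendsto_const_nhds tendsto_const_nhds tendsto_id

theorem dqF_add_le_nhds [IsTopologicalAddGroup E] [ContinuousSMul ℝ E] (hu : dqF f x u ≤ 𝓝 a)
    (hv : dqF f x v ≤ 𝓝 b) : dqF f x (u + v) ≤ 𝓝 (a + b) := by
  set l := (𝓝 x ×ˢ 𝓝 (u + v)) ×ˢ 𝓝[>] (0 : ℝ)
  have hy : Tendsto (fun p : (E × E) × ℝ => p.1.1) l (𝓝 x) := tendsto_fst.comp tendsto_fst
  have hz : Tendsto (fun p : (E × E) × ℝ => p.1.2) l (𝓝 (u + v)) := tendsto_snd.comp tendsto_fst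
  have hr : Tendsto (fun p : (E × E) × ℝ => p.2) l (𝓝[>] 0) := tendsto_snd
  have hyr : Tendsto (fun p : (E × E) × ℝ => p.1.1 + p.2 • u) l (𝓝 x) := by
    simpa using hy.add ((hr.mono_right nhdsWithin_le_nhds).smul_const u)
  have hzu : Tendsto (fun p : (E × E) × ℝ => p.1.2 - u) l (𝓝 v) := by
    simpa using hz.sub_const u
  refine dqF_le_nhds_iff.2 <| ((tendsto_diffQuot_of_dqF_le_nhds hu hy tendsto_const_nhds hr).add
    (tendsto_diffQuot_of_dqF_le_nhds hv hyr hzu hr)).congr fun p => ?_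
  rw [← diffQuot_add, add_sub_cancel]

theorem continuousAt_zero_of_forall_dqF_le_nhds {D : E → ℝ} (hD : ∀ u, dqF f x u ≤ 𝓝 (D u)) :
    ContinuousAt D 0 :=
  tendsto_of_tendsto_uncurry_of_forall_tendsto (Q := diffQuot f x)
    (tendsto_diffQuot_of_dqF_le_nhds (hD 0) tendsto_const_nhds tendsto_fst tendsto_snd)
    fun u => tendsto_diffQuot_nhdsGT_of_dqF_le_nhds (hD u)

theorem exists_continuousLinearMap_of_forall_dqF_le_nhds [IsTopologicalAddGroup E]
    [ContinuousSMul ℝ E] {D : E → ℝ} (hD : ∀ u, dqF f x u ≤ 𝓝 (D u)) :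
    ∃ L : E →L[ℝ] ℝ, ⇑L = D := by
  let D' : E →+ ℝ := AddMonoidHom.mk' D fun u v =>
    eq_of_dqF_le_nhds (hD (u + v)) (dqF_add_le_nhds (hD u) (hD v))
  exact ⟨D'.toRealLinearMap (continuous_of_continuousAt_zero D'
    (continuousAt_zero_of_forall_dqF_le_nhds hD)), rfl⟩

end DiffQuot

theorem stmt13_general (f : X → ℝ) (x : X) (D : X → ℝ) (hD : ∀ x' : X, LIntv f x x' = {D x'}) :
    IsLinearMap ℝ D ∧ Continuous D ∧
      ∀ x' : X, Tendsto (fun r : ℝ => (f (x + r • x') - f x) / r)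
        (𝓝[>] (0 : ℝ)) (𝓝 (D x')) := by
  have hD' : ∀ u, dqF f x u ≤ 𝓝 (D u) := fun u => dqF_le_nhds_of_LIntv_eq_singleton (hD u)
  obtain ⟨L, rfl⟩ := exists_continuousLinearMap_of_forall_dqF_le_nhds hD'
  exact ⟨L.toLinearMap.isLinear, L.continuous,
    fun u => tendsto_diffQuot_nhdsGT_of_dqF_le_nhds (hD' u)⟩

/-- If `f` is continuous, locally Lipschitzian at `x`, and `Lf(x,x')` is a single point
`D x'` for every direction `x'`, then `D = Lf(x,−)` is a continuous linear functional:
`f` has a Gateaux derivative at `x` given by `Df(x,−) = Lf(x,−)`. -/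
theorem stmt13 (f : X → ℝ) (hf : Continuous f) (x : X)
    (O O' : Set X) (hO : IsOpen O) (hxO : x ∈ O) (hO' : IsOpen O') (h0O' : (0 : X) ∈ O')
    (c₁ c₂ δ : ℝ) (hδ : 0 < δ)
    (hbd : ∀ y ∈ O, ∀ z ∈ O', ∀ r : ℝ, 0 < r → r < δ →
      (f (y + r • z) - f y) / r ∈ Set.Icc c₁ c₂)
    (D : X → ℝ) (hD : ∀ x' : X, LIntv f x x' = {D x'}) :
    IsLinearMap ℝ D ∧ Continuous D ∧
      ∀ x' : X, Tendsto (fun r : ℝ => (f (x + r • x') - f x) / r)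
        (𝓝[>] (0 : ℝ)) (𝓝 (D x')) :=
  stmt13_general f x D hD
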